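/- In the LR-ending partisan subtraction game with S = {2, 4k+3} for a positive integer k, the value sequence of a single pile of n tokens is periodic with period 4k+5: for 0 ≤ ℓ ≤ k−1, piles of size 4ℓ, 4ℓ+1, 4ℓ+2, 4ℓ+3 have values *L, *R, {*L}, {*R}, and piles of size 4k, 4k+1, 4k+2, 4k+3, 4k+4 have values *L, *R, {*L}, {*L,*R}, {*R,{*L}} respectively (all up to equivalence, repeating with period 4k+5). -/

import Mathlib

/-- Positions of LR-ending partisan games: two terminals and finite option sets
(represented as lists; set-like behavior is captured by the `Iso` relation). -/
inductive Pos : Type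
  | termL : Pos
  | termR : Pos
  | opts : List Pos → Pos

namespace Pos

/-- Valid positions: every non-terminal position has a nonempty set of options. -/
inductive Valid : Pos → Prop
  | termL : Valid termL
  | termR : Valid termR
  | opts : ∀ gs : List Pos, gs ≠ [] → (∀ g ∈ gs, Valid g) → Valid (opts gs)

/-- Disjunctive sum. -/
def sum : Pos → Pos → Pos
  | termL, termL => termL
  | termL, termR => termR
  | termR, termL => termR
  | termR, termR => termL
  | termL, opts hs => opts (hs.attach.map (fun h => sum termL h.1))
  | termR, opts hs => opts (hs.attach.map (fun h => sum termR h.1))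
  | opts gs, termL => opts (gs.attach.map (fun g => sum g.1 termL))
  | opts gs, termR => opts (gs.attach.map (fun g => sum g.1 termR))
  | opts gs, opts hs =>
      opts (gs.attach.map (fun g => sum g.1 (opts hs)) ++
            hs.attach.map (fun h => sum (opts gs) h.1))
termination_by g h => sizeOf g + sizeOf h
decreasing_by
  all_goals
    first
      | (have := List.sizeOf_lt_of_mem h.2; simp_all; omega)
      | (have := List.sizeOf_lt_of_mem g.2; simp_all; omega)

/-- Conjugate: swap the two kinds of terminal positions. -/
def conj : Pos → Pos
  | termL => termR
  | termR => termL
  | opts gs => opts (gs.attach.map (fun g => conj g.1))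
decreasing_by
  have := List.sizeOf_lt_of_mem g.2; simp_all; omega

/-- Isomorphism of game trees (positions viewed as sets of options). -/
def Iso : Pos → Pos → Prop
  | termL, termL => True
  | termR, termR => True
  | opts gs, opts hs =>
      (∀ g ∈ gs.attach, ∃ h ∈ hs.attach, Iso g.1 h.1) ∧
      (∀ h ∈ hs.attach, ∃ g ∈ gs.attach, Iso g.1 h.1)
  | _, _ => False
termination_by g h => sizeOf g + sizeOf h
decreasing_by
  all_goals
    (have hg := List.sizeOf_lt_of_mem g.2; have hh := List.sizeOf_lt_of_mem h.2;
     simp_all; omega)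

inductive Player : Type
  | left : Player
  | right : Player
  deriving DecidableEq

/-- `Wins p b G` : player `p` has a winning strategy from position `G`,
where `b = true` means it is `p`'s turn to move and `b = false` means the
opponent is to move.  A terminal position is won by the player given by
its label, regardless of whose turn it is. -/
inductive Wins : Player → Bool → Pos → Prop
  | termL : ∀ b, Wins Player.left b termL
  | termR : ∀ b, Wins Player.right b termR
  | move : ∀ (p : Player) (gs : List Pos) (g : Pos), g ∈ gs →
      Wins p false g → Wins p true (opts gs)
  | wait : ∀ (p : Player) (gs : List Pos),
      (∀ g, g ∈ gs → Wins p true g) → Wins p false (opts gs)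

inductive Outcome : Type
  | L : Outcome
  | R : Outcome
  | N : Outcome
  | P : Outcome
  deriving DecidableEq

/-- The outcome of a position. -/
noncomputable def outcome (G : Pos) : Outcome := by
  classical
  exact
    if Wins Player.left true G then
      if Wins Player.left false G then Outcome.L else Outcome.N
    else
      if Wins Player.left false G then Outcome.P else Outcome.R

/-- Equivalence of positions: the outcome agrees in every (valid) context. -/
def equiv (G H : Pos) : Prop :=
  ∀ X : Pos, Valid X → outcome (sum G X) = outcome (sum H X)

end Pos
namespace Pos

mutual
/-- `Ln n` is the position `*L_n`: `*L_0 = *L`, `*L_n = {*L_{n-1}, ..., *L_0}`. -/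
def Ln : ℕ → Pos
  | 0 => termL
  | n + 1 => opts (LnList (n + 1))
termination_by n => 2 * n + 1
/-- `LnList n = [*L_{n-1}, ..., *L_0]`. -/
def LnList : ℕ → List Pos
  | 0 => []
  | n + 1 => Ln n :: LnList n
termination_by n => 2 * n
end

mutual
/-- `Rn n` is the position `*R_n`. -/
def Rn : ℕ → Pos
  | 0 => termR
  | n + 1 => opts (RnList (n + 1))
termination_by n => 2 * n + 1
def RnList : ℕ → List Pos
  | 0 => []
  | n + 1 => Rn n :: RnList n
termination_by n => 2 * n
end

/-- `kome n` is `✠_n = {*L_{n-1}, *R_{n-1}, ..., *L_0, *R_0}` (for `n ≥ 1`). -/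
def kome (n : ℕ) : Pos := opts (LnList n ++ RnList n)

mutual
/-- `starAux n` represents `★(n+1)`: `★1 = {*L, *R}`, `★n = {★(n-1),...,★1,*L,*R}`. -/
def starAux : ℕ → Pos
  | 0 => opts [termL, termR]
  | n + 1 => opts (starList (n + 1) ++ [termL, termR])
termination_by n => 2 * n + 1
/-- `starList n = [★n, ..., ★1]`. -/
def starList : ℕ → List Pos
  | 0 => []
  | n + 1 => starAux n :: starList n
termination_by n => 2 * n
end

/-- `bigstar n` is `★n` (meaningful for `n ≥ 1`). -/
def bigstar (n : ℕ) : Pos := starAux (n - 1)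

/-- Sum of a list of positions (`*L` is the empty sum, and `G + *L = G`). -/
def sumList (l : List Pos) : Pos := l.foldr sum termL

/-- Nim-sum (XOR) of a list of naturals. -/
def xorList (l : List ℕ) : ℕ := l.foldr (· ^^^ ·) 0

/-- Minimum excludant of a list of naturals. -/
noncomputable def mexList (l : List ℕ) : ℕ := sInf {n : ℕ | n ∉ l}

end Pos
namespace Pos

mutual
/-- A single non-initial pile of `n` tokens in Even Nim: an arbitrary positive
even number of tokens may be removed; a pile of 0 or 1 tokens is terminal,
won by Left (even remainder) resp. Right (odd remainder). -/
def npile : ℕ → Pos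
  | 0 => termL
  | 1 => termR
  | n + 2 => opts (npileList (n + 2))
termination_by n => 2 * n + 1
/-- The options of a non-initial pile of `n` tokens: `[pile (n-2), pile (n-4), ...]`. -/
def npileList : ℕ → List Pos
  | 0 => []
  | 1 => []
  | n + 2 => npile n :: npileList n
termination_by n => 2 * n
end

/-- A single initial pile of `a` tokens in Even Nim: any positive number of
tokens may be removed on the first move. -/
def ipile (a : ℕ) : Pos :=
  if a = 0 then termL else opts ((List.range a).reverse.map npile)

/-- A single pile of `n` tokens in the LR-ending partisan subtraction game with
subtraction set `S = {2, m}` (for `m ≥ 2`): a pile of 0 or 1 tokens is terminal,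
won by Left resp. Right according to the parity of the remainder. -/
def subPile (m : ℕ) (n : ℕ) : Pos :=
  if n < 2 then (if n = 0 then termL else termR)
  else opts (subPile m (n - 2) ::
    (if 2 ≤ m ∧ m ≤ n then [subPile m (n - m)] else []))
termination_by n
decreasing_by all_goals omega

end Pos

namespace Pos

/-- The period-`(4k+5)` table of values for the subtraction game with
`S = {2, 4k+3}`: residues `4ℓ, 4ℓ+1, 4ℓ+2, 4ℓ+3` (`0 ≤ ℓ ≤ k-1`) give
`*L, *R, {*L}, {*R}`, and residues `4k, 4k+1, 4k+2, 4k+3, 4k+4` give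
`*L, *R, {*L}, {*L,*R}, {*R,{*L}}`. -/
def table4k3 (k r : ℕ) : Pos :=
  if r < 4 * k then
    (if r % 4 = 0 then termL
     else if r % 4 = 1 then termR
     else if r % 4 = 2 then opts [termL]
     else opts [termR])
  else if r = 4 * k then termL
  else if r = 4 * k + 1 then termR
  else if r = 4 * k + 2 then opts [termL]
  else if r = 4 * k + 3 then opts [termL, termR]
  else opts [termR, opts [termL]]

end Pos

/-! Moves are impartial, so an option `g` of `G` that has a position `H` among its own options
is answered, by either player, by moving on to `H`. Hence `{gs} ≡ {hs}` as soon as every option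
on each side is equivalent to an option on the other side or has the other position as an
option, and `{cs} ≡ t` for a terminal `t` as soon as every `c ∈ cs` has `t` as an option and
`{t} ∈ cs`. A pile of `n` has the options `n - 2` and, for `n ≥ 4k+3`, `n - (4k+3)`, which are
`n + (4k+3)` and `n + 2` modulo `4k+5`; by strong induction on `n` it then remains to check,
residue by residue, that the table is equivalent to the position with the table values at these
two residues as options, and each case is one of the two reductions above. -/

theorem Nat.sub_mod_eq_mod_add_sub {n d p : ℕ} (hn : d ≤ n) (hp : d ≤ p) :
    (n - d) % p = (n % p + (p - d)) % p := by
  rw [Nat.mod_add_mod, ← Nat.add_mod_right (n - d) p, show n - d + p = n + (p - d) by omega]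

namespace Pos

def options : Pos → List Pos
  | opts gs => gs
  | _ => []

def IsTerminal (G : Pos) : Prop := G = termL ∨ G = termR

@[simp] lemma options_termL : options termL = [] := rfl
@[simp] lemma options_termR : options termR = [] := rfl
@[simp] lemma options_opts (gs : List Pos) : options (opts gs) = gs := rfl

lemma sum_opts (gs : List Pos) (X : Pos) :
    sum (opts gs) X = opts (gs.map (sum · X) ++ (options X).map (sum (opts gs))) := by
  cases X <;> simp [sum]

lemma IsTerminal.sum_opts {t : Pos} (ht : IsTerminal t) (xs : List Pos) :
    sum t (opts xs) = opts (xs.map (sum t)) := by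
  rcases ht with rfl | rfl <;> simp [sum]

lemma IsTerminal.sum {t s : Pos} (ht : IsTerminal t) (hs : IsTerminal s) :
    IsTerminal (sum t s) := by
  rcases ht with rfl | rfl <;> rcases hs with rfl | rfl <;> rw [IsTerminal, Pos.sum] <;> simp

lemma sum_mem_options_sum {a g : Pos} (h : a ∈ options g) (X : Pos) :
    sum a X ∈ options (sum g X) := by
  cases g with
  | opts gs => simpa [sum_opts] using Or.inl ⟨a, h, rfl⟩
  | _ => simp at h

lemma wins_true_opts_iff {p : Player} {gs : List Pos} :
    Wins p true (opts gs) ↔ ∃ g ∈ gs, Wins p false g := by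
  constructor
  · rintro (_ | _ | ⟨_, _, g, hg, hw⟩); exact ⟨g, hg, hw⟩
  · rintro ⟨g, hg, hw⟩; exact .move _ _ g hg hw

lemma wins_false_opts_iff {p : Player} {gs : List Pos} :
    Wins p false (opts gs) ↔ ∀ g ∈ gs, Wins p true g := by
  constructor
  · rintro ⟨⟩; assumption
  · exact .wait _ _

lemma Wins.true_of_mem_options {p : Player} {g G : Pos} (h : g ∈ options G)
    (hw : Wins p false g) : Wins p true G := by
  cases G with
  | opts gs => exact .move _ _ g h hw
  | _ => simp at h

lemma Wins.true_of_false_of_mem_options {p : Player} {g G : Pos} (hw : Wins p false G)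
    (h : g ∈ options G) : Wins p true g := by
  cases G with
  | opts gs => exact wins_false_opts_iff.1 hw g h
  | _ => simp at h

lemma IsTerminal.wins_true_iff_false {p : Player} {t : Pos} (ht : IsTerminal t) :
    Wins p true t ↔ Wins p false t := by
  rcases ht with rfl | rfl <;> constructor <;> rintro ⟨⟩ <;> constructor

lemma outcome_eq_iff {G H : Pos} :
    outcome G = outcome H ↔ ∀ b, (Wins .left b G ↔ Wins .left b H) := by
  simp only [outcome, Bool.forall_bool]
  split_ifs <;> simp_all

def Covers (R : Pos → Pos → Prop) (G H : Pos) : Prop :=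
  ∀ g ∈ options G, (∃ h ∈ options H, R g h) ∨ H ∈ options g

lemma wins_left_opts_of_covers {ps qs : List Pos}
    (hpq : Covers (outcome · = outcome ·) (opts ps) (opts qs))
    (hqp : Covers (outcome · = outcome ·) (opts qs) (opts ps)) (b : Bool) :
    Wins .left b (opts ps) → Wins .left b (opts qs) := by
  cases b
  · rw [wins_false_opts_iff, wins_false_opts_iff]
    intro hw q hq
    rcases hqp q hq with ⟨p, hp, he⟩ | hmem
    · exact (outcome_eq_iff.1 he true).2 (hw p hp)
    · exact Wins.true_of_mem_options hmem (wins_false_opts_iff.2 hw)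
  · rw [wins_true_opts_iff]
    rintro ⟨p, hp, hw⟩
    rcases hpq p hp with ⟨q, hq, he⟩ | hmem
    · exact wins_true_opts_iff.2 ⟨q, hq, (outcome_eq_iff.1 he false).1 hw⟩
    · exact hw.true_of_false_of_mem_options hmem

lemma outcome_opts_eq_of_covers {ps qs : List Pos}
    (hpq : Covers (outcome · = outcome ·) (opts ps) (opts qs))
    (hqp : Covers (outcome · = outcome ·) (opts qs) (opts ps)) :
    outcome (opts ps) = outcome (opts qs) :=
  outcome_eq_iff.2 fun b =>
    ⟨wins_left_opts_of_covers hpq hqp b, wins_left_opts_of_covers hqp hpq b⟩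

lemma outcome_opts_eq_of_isTerminal {ps : List Pos} {u : Pos} (hu : IsTerminal u)
    (hsingle : opts [u] ∈ ps) (hps : ∀ p ∈ ps, u ∈ options p) :
    outcome (opts ps) = outcome u := by
  refine outcome_eq_iff.2 fun b => ?_
  cases b
  · rw [wins_false_opts_iff, ← hu.wins_true_iff_false]
    refine ⟨fun hw => ?_, fun hw p hp => Wins.true_of_mem_options (hps p hp) ?_⟩
    · simpa [wins_true_opts_iff, hu.wins_true_iff_false] using hw _ hsingle
    · rwa [← hu.wins_true_iff_false]
  · rw [wins_true_opts_iff]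
    refine ⟨fun ⟨p, hp, hw⟩ => hw.true_of_false_of_mem_options (hps p hp), fun hw => ?_⟩
    exact ⟨_, hsingle, wins_false_opts_iff.2 (by simpa using hw)⟩

@[elab_as_elim]
theorem Valid.induction_on_options {P : Pos → Prop}
    (step : ∀ X, Valid X → (∀ x ∈ options X, P x) → P X) {X : Pos} (hX : Valid X) : P X := by
  induction hX with
  | termL => exact step _ .termL (by simp)
  | termR => exact step _ .termR (by simp)
  | opts gs hne hv ih => exact step _ (.opts gs hne hv) ih

lemma Covers.sum {gs hs : List Pos} (h : Covers equiv (opts gs) (opts hs)) {X : Pos}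
    (hX : Valid X) (ih : ∀ x ∈ options X, outcome (sum (opts gs) x) = outcome (sum (opts hs) x)) :
    Covers (outcome · = outcome ·) (sum (opts gs) X) (sum (opts hs) X) := by
  rw [sum_opts gs X, sum_opts hs X]
  simp only [Covers, options_opts, List.mem_append, List.mem_map]
  rintro _ (⟨g, hg, rfl⟩ | ⟨x, hx, rfl⟩)
  · rcases h g hg with ⟨h, hh, he⟩ | hmem
    · exact .inl ⟨_, .inl ⟨h, hh, rfl⟩, he X hX⟩
    · exact .inr (by simpa only [sum_opts] using sum_mem_options_sum hmem X)
  · exact .inl ⟨_, .inr ⟨x, hx, rfl⟩, ih x hx⟩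

theorem equiv_opts_of_covers {gs hs : List Pos} (hgh : Covers equiv (opts gs) (opts hs))
    (hhg : Covers equiv (opts hs) (opts gs)) : equiv (opts gs) (opts hs) := by
  intro X hX
  refine Valid.induction_on_options (fun X hX ih => ?_) hX
  have hcov := hgh.sum hX ih
  have hcov' := hhg.sum hX fun x hx => (ih x hx).symm
  rw [sum_opts gs X, sum_opts hs X] at hcov hcov' ⊢
  exact outcome_opts_eq_of_covers hcov hcov'

theorem equiv_of_isTerminal {t : Pos} (ht : IsTerminal t) {cs : List Pos}
    (hsingle : opts [t] ∈ cs) (hcs : ∀ c ∈ cs, t ∈ options c) : equiv (opts cs) t := by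
  have terminal_context {s : Pos} (hs : IsTerminal s) : outcome (sum (opts cs) s) = outcome (sum t s) := by
    have hnil : options s = [] := by rcases hs with rfl | rfl <;> rfl
    rw [sum_opts, hnil, List.map_nil, List.append_nil]
    refine outcome_opts_eq_of_isTerminal (ht.sum hs) ?_ ?_
    · exact List.mem_map.2 ⟨_, hsingle, by simp [sum_opts, hnil]⟩
    · simp only [List.mem_map]
      rintro _ ⟨c, hc, rfl⟩
      exact sum_mem_options_sum (hcs c hc) s
  intro X hX
  refine Valid.induction_on_options (fun X hX ih => ?_) hX
  cases X with
  | termL => exact terminal_context (.inl rfl)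
  | termR => exact terminal_context (.inr rfl)
  | opts xs =>
    rw [sum_opts, ht.sum_opts]
    refine outcome_opts_eq_of_covers ?_ ?_
    · simp only [Covers, options_opts, List.mem_append, List.mem_map]
      rintro _ (⟨c, hc, rfl⟩ | ⟨x, hx, rfl⟩)
      · exact .inr (by simpa only [ht.sum_opts] using sum_mem_options_sum (hcs c hc) (opts xs))
      · exact .inl ⟨_, ⟨x, hx, rfl⟩, ih x hx⟩
    · simp only [Covers, options_opts, List.mem_append, List.mem_map]
      rintro _ ⟨x, hx, rfl⟩
      exact .inl ⟨_, .inr ⟨x, hx, rfl⟩, (ih x hx).symm⟩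

lemma equiv.refl (G : Pos) : equiv G G := fun _ _ => rfl

lemma equiv.symm {G H : Pos} (h : equiv G H) : equiv H G := fun X hX => (h X hX).symm

lemma equiv.trans {G H K : Pos} (h₁ : equiv G H) (h₂ : equiv H K) : equiv G K :=
  fun X hX => (h₁ X hX).trans (h₂ X hX)

lemma _root_.List.Forall₂.exists_of_mem_left {α β : Type*} {R : α → β → Prop} {l₁ : List α}
    {l₂ : List β} (h : List.Forall₂ R l₁ l₂) {a : α} (ha : a ∈ l₁) : ∃ b ∈ l₂, R a b := by
  induction h with
  | nil => simp at ha
  | cons hab _ ih =>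
    rcases List.mem_cons.1 ha with rfl | ha
    · exact ⟨_, List.mem_cons_self, hab⟩
    · obtain ⟨b, hb, hr⟩ := ih ha
      exact ⟨b, List.mem_cons_of_mem _ hb, hr⟩

lemma equiv_opts_of_forall₂ {gs hs : List Pos} (h : List.Forall₂ equiv gs hs) :
    equiv (opts gs) (opts hs) :=
  equiv_opts_of_covers (fun _ hg => .inl (h.exists_of_mem_left hg))
    fun _ hh => .inl <| by
      obtain ⟨g, hg, he⟩ := (List.Forall₂.flip (R := flip equiv) h).exists_of_mem_left hh
      exact ⟨g, hg, equiv.symm he⟩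

lemma equiv_opts_of_subset {gs hs : List Pos} (h₁ : gs ⊆ hs) (h₂ : hs ⊆ gs) :
    equiv (opts gs) (opts hs) :=
  equiv_opts_of_covers (fun g hg => .inl ⟨g, h₁ hg, .refl g⟩)
    (fun h hh => .inl ⟨h, h₂ hh, .refl h⟩)

lemma opts_opts_termL_equiv : equiv (opts [opts [termL]]) termL :=
  equiv_of_isTerminal (.inl rfl) (by simp) (by simp)

lemma opts_opts_termR_equiv : equiv (opts [opts [termR]]) termR :=
  equiv_of_isTerminal (.inr rfl) (by simp) (by simp)

lemma opts_opts_termL_termR_opts_termL_equiv :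
    equiv (opts [opts [termL, termR], opts [termL]]) termL :=
  equiv_of_isTerminal (.inl rfl) (by simp) (by simp)

lemma opts_opts_termR_opts_termL_opts_termR_equiv :
    equiv (opts [opts [termR, opts [termL]], opts [termR]]) termR :=
  equiv_of_isTerminal (.inr rfl) (by simp) (by simp)

lemma opts_opts_termR_opts_termL_termR_equiv :
    equiv (opts [opts [termR], opts [termL, termR]]) termR :=
  equiv_of_isTerminal (.inr rfl) (by simp) (by simp)

lemma opts_termL_opts_termR_opts_termL_equiv :
    equiv (opts [termL, opts [termR, opts [termL]]]) (opts [termL]) :=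
  equiv_opts_of_covers (by simp [Covers, equiv.refl]) (by simp [Covers, equiv.refl])

lemma subPile_of_two_le {m n : ℕ} (hm : 2 ≤ m) (hn : 2 ≤ n) :
    subPile m n = opts (subPile m (n - 2) :: if m ≤ n then [subPile m (n - m)] else []) := by
  rw [subPile, if_neg (by omega)]
  simp [hm]

section table

variable {k r : ℕ}

lemma table4k3_eq_termL (h : r < 4 * k ∧ r % 4 = 0 ∨ r = 4 * k) : table4k3 k r = termL := by
  unfold table4k3; split_ifs <;> first | rfl | omega

lemma table4k3_eq_termR (h : r < 4 * k ∧ r % 4 = 1 ∨ r = 4 * k + 1) : table4k3 k r = termR := by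
  unfold table4k3; split_ifs <;> first | rfl | omega

lemma table4k3_eq_opts_termL (h : r < 4 * k ∧ r % 4 = 2 ∨ r = 4 * k + 2) :
    table4k3 k r = opts [termL] := by
  unfold table4k3; split_ifs <;> first | rfl | omega

lemma table4k3_eq_opts_termR (h : r < 4 * k ∧ r % 4 = 3) : table4k3 k r = opts [termR] := by
  unfold table4k3; split_ifs <;> first | rfl | omega

lemma table4k3_eq_opts_termL_termR (h : r = 4 * k + 3) : table4k3 k r = opts [termL, termR] := by
  unfold table4k3; split_ifs <;> first | rfl | omega

lemma table4k3_eq_opts_termR_opts_termL (h : r = 4 * k + 4) :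
    table4k3 k r = opts [termR, opts [termL]] := by
  unfold table4k3; split_ifs <;> first | rfl | omega

lemma table4k3_add_two (h₂ : 2 ≤ r) (h : r ≤ 4 * k) : table4k3 k (r + 2) = table4k3 k (r - 2) := by
  unfold table4k3; split_ifs <;> first | rfl | omega

lemma opts_table4k3_sub_two_equiv (h₂ : 2 ≤ r) (h : r ≤ 4 * k + 2) :
    equiv (opts [table4k3 k (r - 2)]) (table4k3 k r) := by
  rcases (by omega : r % 4 = 0 ∨ r % 4 = 1 ∨ r % 4 = 2 ∨ r % 4 = 3) with h4 | h4 | h4 | h4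
  · rw [table4k3_eq_opts_termL (by omega), table4k3_eq_termL (by omega)]
    exact opts_opts_termL_equiv
  · rw [table4k3_eq_opts_termR (by omega), table4k3_eq_termR (by omega)]
    exact opts_opts_termR_equiv
  · rw [table4k3_eq_termL (by omega), table4k3_eq_opts_termL (by omega)]
    exact .refl _
  · rw [table4k3_eq_termR (by omega), table4k3_eq_opts_termR (by omega)]
    exact .refl _

-- `(r + (4k+3)) % (4k+5)` and `(r + 2) % (4k+5)` are the residues of `n - 2` and `n - (4k+3)`
-- when `n % (4k+5) = r`.
lemma opts_table4k3_equiv (hk : 1 ≤ k) (hr : r < 4 * k + 5) :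
    equiv (opts [table4k3 k ((r + (4 * k + 3)) % (4 * k + 5)),
      table4k3 k ((r + 2) % (4 * k + 5))]) (table4k3 k r) := by
  have hprev : (r + (4 * k + 3)) % (4 * k + 5) = if 2 ≤ r then r - 2 else r + (4 * k + 3) := by
    rw [Nat.add_mod_eq_ite, Nat.mod_eq_of_lt hr, Nat.mod_eq_of_lt (by omega)]
    split_ifs <;> omega
  have hnext : (r + 2) % (4 * k + 5) = if r + 2 < 4 * k + 5 then r + 2 else r - (4 * k + 3) := by
    rw [Nat.add_mod_eq_ite, Nat.mod_eq_of_lt hr, Nat.mod_eq_of_lt (by omega)]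
    split_ifs <;> omega
  rw [hprev, hnext]
  obtain h | rfl | rfl | rfl | rfl | rfl | rfl : 2 ≤ r ∧ r ≤ 4 * k ∨ r = 0 ∨ r = 1 ∨
      r = 4 * k + 1 ∨ r = 4 * k + 2 ∨ r = 4 * k + 3 ∨ r = 4 * k + 4 := by omega
  · rw [if_pos h.1, if_pos (by omega), table4k3_add_two h.1 h.2]
    exact (equiv_opts_of_subset (by simp) (by simp)).trans
      (opts_table4k3_sub_two_equiv h.1 (by omega))
  · rw [if_neg (by omega), if_pos (by omega), table4k3_eq_opts_termL_termR (by omega),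
      table4k3_eq_opts_termL (by omega), table4k3_eq_termL (by omega)]
    exact opts_opts_termL_termR_opts_termL_equiv
  · rw [if_neg (by omega), if_pos (by omega), table4k3_eq_opts_termR_opts_termL (by omega),
      table4k3_eq_opts_termR (by omega), table4k3_eq_termR (by omega)]
    exact opts_opts_termR_opts_termL_opts_termR_equiv
  · rw [if_pos (by omega), if_pos (by omega), table4k3_eq_opts_termR (by omega),
      table4k3_eq_opts_termL_termR (by omega), table4k3_eq_termR (by omega)]
    exact opts_opts_termR_opts_termL_termR_equiv
  · rw [if_pos (by omega), if_pos (by omega), table4k3_eq_termL (by omega),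
      table4k3_eq_opts_termR_opts_termL (by omega), table4k3_eq_opts_termL (by omega)]
    exact opts_termL_opts_termR_opts_termL_equiv
  · rw [if_pos (by omega), if_neg (by omega), table4k3_eq_termR (by omega),
      table4k3_eq_termL (by omega), table4k3_eq_opts_termL_termR (by omega)]
    exact equiv_opts_of_subset (by simp) (by simp)
  · rw [if_pos (by omega), if_neg (by omega), table4k3_eq_opts_termL (by omega),
      table4k3_eq_termR (by omega), table4k3_eq_opts_termR_opts_termL (by omega)]
    exact equiv_opts_of_subset (by simp) (by simp)

end table

end Pos

/-- in the LR-ending partisan subtraction game with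
`S = {2, 4k+3}` (`k ≥ 1`), the value of a pile of `n` tokens is periodic with
period `4k+5`, given by the table above (up to equivalence). -/
theorem subtraction_2_4k3 (k : ℕ) (hk : 1 ≤ k) (n : ℕ) :
    Pos.equiv (Pos.subPile (4 * k + 3) n) (Pos.table4k3 k (n % (4 * k + 5))) := by
  open Pos in
  induction n using Nat.strong_induction_on with
  | _ n ih =>
  obtain h | h | h : n < 2 ∨ 2 ≤ n ∧ n < 4 * k + 3 ∨ 4 * k + 3 ≤ n := by omega
  · rw [Nat.mod_eq_of_lt (by omega)]
    interval_cases n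
    · rw [subPile, table4k3_eq_termL (by omega)]; simpa using equiv.refl _
    · rw [subPile, table4k3_eq_termR (by omega)]; simpa using equiv.refl _
  · have ih₂ := ih (n - 2) (by omega)
    rw [Nat.mod_eq_of_lt (by omega)] at ih₂
    rw [subPile_of_two_le (by omega) h.1, if_neg (by omega), Nat.mod_eq_of_lt (by omega)]
    exact (equiv_opts_of_forall₂ (.cons ih₂ .nil)).trans
      (opts_table4k3_sub_two_equiv h.1 (by omega))
  · have ih₂ := ih (n - 2) (by omega)
    have ihₘ := ih (n - (4 * k + 3)) (by omega)
    rw [Nat.sub_mod_eq_mod_add_sub (by omega) (by omega), show 4 * k + 5 - 2 = 4 * k + 3 by omega]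
      at ih₂
    rw [Nat.sub_mod_eq_mod_add_sub h (by omega), show 4 * k + 5 - (4 * k + 3) = 2 by omega] at ihₘ
    rw [subPile_of_two_le (by omega) (by omega), if_pos h]
    exact (equiv_opts_of_forall₂ (.cons ih₂ (.cons ihₘ .nil))).trans
      (opts_table4k3_equiv hk (Nat.mod_lt _ (by omega)))
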